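/- Let r > 1 and let p, q be coprime positive integers with p < q. Then there exists m_*(r) > 0 such that for every m with 0 < m < min{1, m_*(r)} there exist real numbers 0 < c_min < c_max such that for every c ∈ (c_min, c_max) there is a function φ : ℤ → ℝ satisfying: φ_i = 1 for all i ≤ 0; φ_i > 0 for all i ∈ ℤ; φ_i → 0 as i → +∞; and (G^{(q)} φ)_i = φ_{i-p} for all i ∈ ℤ. In other words, φ is a positive traveling front solution of speed p/q, i.e. a fixed point of the map S^{(p)} ∘ G^{(q)}. -/

import Mathlib

open Filter

/-- The piecewise linear reproduction function `g(u) = r u` for `u < c`, `g(u) = 1` for `u ≥ c`. -/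
noncomputable def g (r c u : ℝ) : ℝ := if u < c then r * u else 1

/-- The generational map `G`: migration followed by reproduction. -/
noncomputable def G (r c m : ℝ) (u : ℤ → ℝ) : ℤ → ℝ :=
  fun i => g r c (m / 2 * u (i - 1) + (1 - m) * u i + m / 2 * u (i + 1))

/-!
Write a front of speed `p/q` as `u^s_i = F (q i - s p)`. One generation `u^s ↦ u^(s+1)` then
becomes an equation for the single profile `F : ℤ → ℝ` in the depth `d = q i - s p`:
`g (m/2 F(e - q) + (1 - m) F e + m/2 F(e + q)) = F (e - p)`. We solve it with `F = 1` for `d < q`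
and `F d = r · (average of F around d + p)` for `d ≥ q`. The exponential `η^(-d)` solves this
linear part exactly when `r (m/2 η^q + 1 - m + m/2 η^(-q)) = η^p`, and for small `m` this
dispersion relation has a root `η > 1`. Starting from the supersolution `min 1 η^(q-1-d)`, the
monotone iteration decreases to a fixed point lying above the subsolution `min 1 η^(-1-d)`; it
is positive, decays, and is nonincreasing in `d`. The threshold `c` is then chosen between
the averages at `e = q + p` and `e = q + p - 1`, on the two sides of the plateau edge. These
differ because the strict decrease of `F` from `q - 1` to `q` propagates through the averages to
`q + p - 1`.
-/

namespace TravelingFront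

open Function Topology

noncomputable def migration (m : ℝ) (k : ℤ) (u : ℤ → ℝ) (i : ℤ) : ℝ :=
  m / 2 * u (i - k) + (1 - m) * u i + m / 2 * u (i + k)

theorem G_apply (r c m : ℝ) (u : ℤ → ℝ) (i : ℤ) : G r c m u i = g r c (migration m 1 u i) :=
  rfl

theorem migration_comp_affine (m : ℝ) (k a b : ℤ) (F : ℤ → ℝ) (i : ℤ) :
    migration m k (fun j => F (a * j - b)) i = migration m (a * k) F (a * i - b) := by
  simp only [migration]
  ring_nf

section migration

variable {m : ℝ} {k : ℤ} {u : ℤ → ℝ}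

theorem monotone_migration (hm0 : 0 ≤ m) (hm1 : m ≤ 1) : Monotone (migration m k) :=
  fun u v huv i => by
  have := huv (i - k); have := huv i; have := huv (i + k)
  simp only [migration]
  nlinarith

theorem antitone_migration (hm0 : 0 ≤ m) (hm1 : m ≤ 1) (hu : Antitone u) :
    Antitone (migration m k u) := fun i j hij => by
  have := hu (show i - k ≤ j - k by omega); have := hu hij
  have := hu (show i + k ≤ j + k by omega)
  simp only [migration]
  nlinarith

theorem migration_pos (hm0 : 0 ≤ m) (hm1 : m < 1) (hu : ∀ i, 0 < u i) (i : ℤ) :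
    0 < migration m k u i := by
  have := hu (i - k); have := hu i; have := hu (i + k)
  simp only [migration]
  nlinarith

theorem migration_succ_lt (hm0 : 0 < m) (hm1 : m < 1) (hu : Antitone u) {x : ℤ}
    (h : u (x - k + 1) < u (x - k) ∨ u (x + 1) < u x) :
    migration m k u (x + 1) < migration m k u x := by
  have h₁ := hu (show x - k ≤ x + 1 - k by omega)
  have h₂ := hu (show x ≤ x + 1 by omega)
  have h₃ := hu (show x + k ≤ x + 1 + k by omega)
  rw [show x - k + 1 = x + 1 - k by ring] at h
  simp only [migration]
  rcases h with h | h <;> nlinarith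

theorem migration_zpow (m : ℝ) {η : ℝ} (hη : η ≠ 0) (k a e : ℤ) :
    migration m k (fun j => η ^ (a - j)) e =
      (m / 2 * η ^ k + (1 - m) + m / 2 * η ^ (-k)) * η ^ (a - e) := by
  simp only [migration, add_mul, mul_assoc, ← zpow_add₀ hη]
  ring_nf

end migration

section fixedPoint

variable {ι : Type*} {T : (ι → ℝ) → ι → ℝ} {lo up : ι → ℝ}

theorem le_iterate_of_le_map (hT : Monotone T) (hlo : lo ≤ T lo) (hle : lo ≤ up) (n : ℕ) :
    lo ≤ T^[n] up :=
  (hT.monotone_iterate_of_le_map hlo (Nat.zero_le n)).trans (hT.iterate n hle)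

theorem tendsto_iterate_iInf (hT : Monotone T) (hlo : lo ≤ T lo) (hup : T up ≤ up)
    (hle : lo ≤ up) :
    Tendsto (fun n => T^[n] up) atTop (𝓝 fun i => ⨅ n, T^[n] up i) :=
  tendsto_pi_nhds.2 fun i =>
    tendsto_atTop_ciInf (fun _ _ hab => hT.antitone_iterate_of_map_le hup hab i)
      ⟨lo i, Set.forall_mem_range.2 fun n => le_iterate_of_le_map hT hlo hle n i⟩

theorem isFixedPt_iInf_iterate (hT : Monotone T) (hTc : Continuous T) (hlo : lo ≤ T lo)
    (hup : T up ≤ up) (hle : lo ≤ up) :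
    IsFixedPt T fun i => ⨅ n, T^[n] up i := by
  have h := tendsto_iterate_iInf hT hlo hup hle
  refine tendsto_nhds_unique ((hTc.tendsto _).comp h) ?_
  refine (h.comp (tendsto_add_atTop_nat 1)).congr fun n => ?_
  simp only [comp_apply, iterate_succ_apply']

end fixedPoint

-- `d` is the depth `q i - s p` of site `i` at generation `s`; the plateau is `d < q`.
noncomputable def profileStep (r m : ℝ) (p q : ℕ) (F : ℤ → ℝ) (d : ℤ) : ℝ :=
  if d < q then 1 else r * migration m q F (d + p)

section profileStep

variable {r m : ℝ} {p q : ℕ}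

theorem profileStep_of_lt {d : ℤ} (hd : d < q) (F : ℤ → ℝ) : profileStep r m p q F d = 1 :=
  if_pos hd

theorem profileStep_of_le {d : ℤ} (hd : (q : ℤ) ≤ d) (F : ℤ → ℝ) :
    profileStep r m p q F d = r * migration m q F (d + p) :=
  if_neg (not_lt.2 hd)

theorem monotone_profileStep (hr : 0 ≤ r) (hm0 : 0 ≤ m) (hm1 : m ≤ 1) :
    Monotone (profileStep r m p q) := fun F F' hF d => by
  unfold profileStep
  split_ifs
  · exact le_rfl
  · exact mul_le_mul_of_nonneg_left (monotone_migration hm0 hm1 hF _) hr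

theorem continuous_profileStep : Continuous (profileStep r m p q) :=
  continuous_pi fun d => by
    unfold profileStep migration
    split_ifs <;> fun_prop

theorem antitone_profileStep (hr : 0 ≤ r) (hm0 : 0 ≤ m) (hm1 : m ≤ 1) {F : ℤ → ℝ}
    (hF : Antitone F) (h1 : profileStep r m p q F ≤ 1) : Antitone (profileStep r m p q F) := by
  intro d d' hdd'
  by_cases hd' : d' < q
  · rw [profileStep_of_lt hd', profileStep_of_lt (hdd'.trans_lt hd')]
  by_cases hd : d < q
  · rw [profileStep_of_lt hd]; exact h1 d'
  rw [profileStep_of_le (not_lt.1 hd'), profileStep_of_le (not_lt.1 hd)]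
  exact mul_le_mul_of_nonneg_left (antitone_migration hm0 hm1 hF (by omega)) hr

end profileStep

noncomputable def envelope (η : ℝ) (a d : ℤ) : ℝ := min 1 (η ^ (a - d))

section envelope

variable {η : ℝ}

theorem envelope_pos (hη : 0 < η) (a d : ℤ) : 0 < envelope η a d :=
  lt_min one_pos (zpow_pos hη _)

theorem envelope_le_one (a : ℤ) : envelope η a ≤ 1 := fun _ => min_le_left _ _

theorem envelope_le_zpow (a d : ℤ) : envelope η a d ≤ η ^ (a - d) := min_le_right _ _

theorem envelope_of_le (hη : 1 ≤ η) {a d : ℤ} (had : a ≤ d) : envelope η a d = η ^ (a - d) :=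
  min_eq_right (zpow_le_one_of_nonpos₀ hη (by omega))

theorem envelope_of_ge (hη : 1 ≤ η) {a d : ℤ} (hda : d ≤ a) : envelope η a d = 1 :=
  min_eq_left (one_le_zpow₀ hη (by omega))

theorem antitone_envelope (hη : 1 ≤ η) (a : ℤ) : Antitone (envelope η a) :=
  antitone_const.min fun _ _ hd => zpow_le_zpow_right₀ hη (by omega)

theorem envelope_mono (hη : 1 ≤ η) {a b : ℤ} (hab : a ≤ b) : envelope η a ≤ envelope η b :=
  fun _ => min_le_min_left _ (zpow_le_zpow_right₀ hη (by omega))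

theorem tendsto_envelope (hη : 1 < η) (a : ℤ) : Tendsto (envelope η a) atTop (𝓝 0) := by
  have hη₀ : 0 < η := zero_lt_one.trans hη
  have hexp : Tendsto (fun d : ℤ => η ^ (a - d)) atTop (𝓝 0) := by
    refine ((tendsto_rpow_atTop_of_base_lt_one η⁻¹ (by linarith [inv_pos.2 hη₀])
      (inv_lt_one_of_one_lt₀ hη)).comp (tendsto_intCast_atTop_atTop.comp
        (tendsto_atTop_add_const_right _ (-a) tendsto_id))).congr fun d => ?_
    simp only [comp_apply, id, Real.rpow_intCast, inv_zpow', neg_add, neg_neg]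
    ring_nf
  exact tendsto_of_tendsto_of_tendsto_of_le_of_le tendsto_const_nhds hexp
    (fun d => (envelope_pos hη₀ a d).le) (envelope_le_zpow a)

end envelope

theorem reaches_add_sub_one (P : ℤ → Prop) {p q : ℕ} (hp : 0 < p) (hpq : p < q)
    (h₀ : P (q - 1)) (hstep : ∀ e : ℤ, q ≤ e → P (e + p - q) ∨ P (e + p) → P e) :
    P (q + p - 1) := by
  -- `P` travels through the window `[q, 2q)` along the residues of `q - 1 - (k + 1) p` mod `q`,
  -- which reach `p - 1` at `k = q - 2`
  have hq : (0 : ℤ) < q := by omega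
  have key : ∀ k : ℕ, P (q + (q - 1 - (k + 1) * p) % q) := by
    intro k
    induction k with
    | zero =>
      rw [Int.emod_eq_of_lt (by push_cast; omega) (by push_cast; omega)]
      exact hstep _ (by push_cast; omega) (Or.inl (by convert h₀ using 1; push_cast; ring))
    | succ k ih =>
      set u := (q - 1 - (k + 1) * p : ℤ) % q
      have hu₀ : 0 ≤ u := Int.emod_nonneg _ hq.ne'
      have hu₁ : u < q := Int.emod_lt_of_pos _ hq
      have hmod : (q - 1 - ((k + 1 : ℕ) + 1) * p : ℤ) % q = (u - p) % q := by
        have := ((Int.mod_modEq (q - 1 - (k + 1) * p : ℤ) q).sub_right (p : ℤ)).symm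
        rw [Int.ModEq] at this
        rw [← this]; push_cast; ring_nf
      rw [hmod]
      by_cases hup : (p : ℤ) ≤ u
      · rw [Int.emod_eq_of_lt (by omega) (by omega)]
        exact hstep _ (by omega) (Or.inr (by convert ih using 1; ring))
      · rw [← Int.add_emod_right, Int.emod_eq_of_lt (by omega) (by omega)]
        exact hstep _ (by omega) (Or.inl (by convert ih using 1; ring))
  have hlast : (q - 1 - ((q - 2 : ℕ) + 1) * p : ℤ) % q = p - 1 := by
    rw [show (q - 1 - ((q - 2 : ℕ) + 1) * p : ℤ) = p - 1 + q * (1 - p) by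
        push_cast [Nat.cast_sub (show 2 ≤ q by omega)]; ring,
      Int.add_mul_emod_self_left, Int.emod_eq_of_lt (by omega) (by omega)]
  convert key (q - 2) using 1
  rw [hlast]; ring

theorem g_migration_eq_of_isFixedPt {r m c : ℝ} {p q : ℕ} {F : ℤ → ℝ}
    (hF : IsFixedPt (profileStep r m p q) F) (hanti : Antitone F) (hm0 : 0 ≤ m) (hm1 : m ≤ 1)
    (hc₁ : migration m q F (q + p) < c) (hc₂ : c ≤ migration m q F (q + p - 1)) (e : ℤ) :
    g r c (migration m q F e) = F (e - p) := by
  have hA := antitone_migration (k := q) hm0 hm1 hanti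
  rw [g, ← congrFun hF.eq (e - p)]
  by_cases he : e < q + p
  · rw [if_neg (not_lt.2 (hc₂.trans (hA (by omega : e ≤ q + p - 1)))),
      profileStep_of_lt (by omega)]
  · rw [if_pos ((hA (by omega : (q + p : ℤ) ≤ e)).trans_lt hc₁), profileStep_of_le (by omega),
      sub_add_cancel]

theorem iterate_G_of_profile {r c m : ℝ} {p q : ℕ} {F : ℤ → ℝ}
    (hF : ∀ e, g r c (migration m q F e) = F (e - p)) (n : ℕ) :
    (G r c m)^[n] (fun i => F (q * i)) = fun i => F (q * i - n * p) := by
  induction n with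
  | zero => simp
  | succ n ih =>
    ext i
    rw [iterate_succ_apply', ih, G_apply, migration_comp_affine, mul_one, hF]
    push_cast; ring_nf

structure IsDispersionRoot (r m : ℝ) (p q : ℕ) (η : ℝ) : Prop where
  r_pos : 0 < r
  m_pos : 0 < m
  m_lt_one : m < 1
  one_lt : 1 < η
  eq : r * (m / 2 * η ^ q + (1 - m) + m / 2 * (η ^ q)⁻¹) = η ^ p

noncomputable def wave (r m : ℝ) (p q : ℕ) (η : ℝ) (d : ℤ) : ℝ :=
  ⨅ n, (profileStep r m p q)^[n] (envelope η (q - 1)) d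

namespace IsDispersionRoot

variable {r m η : ℝ} {p q : ℕ}

theorem monotone_profileStep (hR : IsDispersionRoot r m p q η) :
    Monotone (profileStep r m p q) :=
  TravelingFront.monotone_profileStep hR.r_pos.le hR.m_pos.le hR.m_lt_one.le

theorem profileStep_zpow (hR : IsDispersionRoot r m p q η) (a : ℤ) {d : ℤ} (hd : (q : ℤ) ≤ d) :
    profileStep r m p q (fun j => η ^ (a - j)) d = η ^ (a - d) := by
  have hη : η ≠ 0 := (zero_lt_one.trans hR.one_lt).ne'
  rw [profileStep_of_le hd, migration_zpow m hη, zpow_neg, zpow_natCast, ← mul_assoc, hR.eq,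
    ← zpow_natCast, ← zpow_add₀ hη]
  ring_nf

theorem profileStep_envelope_le (hR : IsDispersionRoot r m p q η) :
    profileStep r m p q (envelope η (q - 1)) ≤ envelope η (q - 1) := by
  intro d
  by_cases hd : d < q
  · rw [profileStep_of_lt hd, envelope_of_ge hR.one_lt.le (by omega)]
  calc profileStep r m p q (envelope η (q - 1)) d
      ≤ profileStep r m p q (fun j => η ^ (q - 1 - j)) d :=
        hR.monotone_profileStep (envelope_le_zpow _) d
    _ = envelope η (q - 1) d := by
        rw [hR.profileStep_zpow _ (not_lt.1 hd), envelope_of_le hR.one_lt.le (by omega)]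

theorem envelope_le_profileStep (hR : IsDispersionRoot r m p q η) {a : ℤ} (ha : a ≤ p) :
    envelope η a ≤ profileStep r m p q (envelope η a) := by
  intro d
  by_cases hd : d < q
  · rw [profileStep_of_lt hd]; exact envelope_le_one a d
  rw [not_lt] at hd
  have hexp : migration m q (envelope η a) (d + p) =
      migration m q (fun j => η ^ (a - j)) (d + p) := by
    simp only [migration, envelope_of_le hR.one_lt.le (show a ≤ d + p - q by omega),
      envelope_of_le hR.one_lt.le (show a ≤ d + p by omega),
      envelope_of_le hR.one_lt.le (show a ≤ d + p + q by omega)]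
  rw [profileStep_of_le hd, hexp, ← profileStep_of_le hd, hR.profileStep_zpow a hd]
  exact envelope_le_zpow a d

theorem le_iterate (hR : IsDispersionRoot r m p q η) (n : ℕ) :
    envelope η (-1) ≤ (profileStep r m p q)^[n] (envelope η (q - 1)) :=
  le_iterate_of_le_map hR.monotone_profileStep (hR.envelope_le_profileStep (by omega))
    (envelope_mono hR.one_lt.le (by omega)) n

theorem isFixedPt_wave (hR : IsDispersionRoot r m p q η) :
    IsFixedPt (profileStep r m p q) (wave r m p q η) :=
  isFixedPt_iInf_iterate hR.monotone_profileStep continuous_profileStep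
    (hR.envelope_le_profileStep (a := -1) (by omega)) hR.profileStep_envelope_le
    (envelope_mono hR.one_lt.le (by omega))

theorem bddBelow_iterate (hR : IsDispersionRoot r m p q η) (d : ℤ) :
    BddBelow (Set.range fun n => (profileStep r m p q)^[n] (envelope η (q - 1)) d) :=
  ⟨envelope η (-1) d, Set.forall_mem_range.2 fun n => hR.le_iterate n d⟩

theorem envelope_le_wave (hR : IsDispersionRoot r m p q η) (d : ℤ) :
    envelope η (-1) d ≤ wave r m p q η d :=
  le_ciInf fun n => hR.le_iterate n d

theorem wave_le_envelope (hR : IsDispersionRoot r m p q η) (d : ℤ) :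
    wave r m p q η d ≤ envelope η (q - 1) d :=
  ciInf_le (hR.bddBelow_iterate d) 0

theorem wave_pos (hR : IsDispersionRoot r m p q η) (d : ℤ) : 0 < wave r m p q η d :=
  (envelope_pos (zero_lt_one.trans hR.one_lt) (-1) d).trans_le (hR.envelope_le_wave d)

theorem antitone_iterate (hR : IsDispersionRoot r m p q η) (n : ℕ) :
    Antitone ((profileStep r m p q)^[n] (envelope η (q - 1))) := by
  induction n with
  | zero => exact antitone_envelope hR.one_lt.le _
  | succ n ih =>
    rw [iterate_succ_apply']
    refine antitone_profileStep hR.r_pos.le hR.m_pos.le hR.m_lt_one.le ih fun d => ?_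
    rw [← iterate_succ_apply' (profileStep r m p q)]
    exact (hR.monotone_profileStep.antitone_iterate_of_map_le hR.profileStep_envelope_le
      (Nat.zero_le (n + 1)) d).trans (envelope_le_one _ d)

theorem antitone_wave (hR : IsDispersionRoot r m p q η) : Antitone (wave r m p q η) :=
  fun _ _ hd => ciInf_mono (hR.bddBelow_iterate _) fun n => hR.antitone_iterate n hd

theorem wave_of_lt (hR : IsDispersionRoot r m p q η) {d : ℤ} (hd : d < q) :
    wave r m p q η d = 1 := by
  rw [← hR.isFixedPt_wave.eq, profileStep_of_lt hd]

theorem wave_of_le (hR : IsDispersionRoot r m p q η) {d : ℤ} (hd : (q : ℤ) ≤ d) :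
    wave r m p q η d = r * migration m q (wave r m p q η) (d + p) := by
  conv_lhs => rw [← hR.isFixedPt_wave.eq, profileStep_of_le hd]

theorem tendsto_wave (hR : IsDispersionRoot r m p q η) :
    Tendsto (wave r m p q η) atTop (𝓝 0) :=
  tendsto_of_tendsto_of_tendsto_of_le_of_le tendsto_const_nhds
    (tendsto_envelope hR.one_lt _) (fun d => (hR.wave_pos d).le) hR.wave_le_envelope

theorem wave_lt_wave (hR : IsDispersionRoot r m p q η) (hp : 0 < p) (hpq : p < q) :
    wave r m p q η (q + p) < wave r m p q η (q + p - 1) := by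
  suffices h : wave r m p q η (q + p - 1 + 1) < wave r m p q η (q + p - 1) by
    rwa [sub_add_cancel] at h
  refine reaches_add_sub_one (fun e => wave r m p q η (e + 1) < wave r m p q η e) hp hpq ?_ ?_
  · rw [sub_add_cancel, hR.wave_of_lt (d := q - 1) (by omega)]
    calc wave r m p q η q ≤ η ^ ((q - 1 : ℤ) - q) :=
          (hR.wave_le_envelope q).trans (envelope_le_zpow _ _)
      _ < 1 := zpow_lt_one_of_neg₀ hR.one_lt (by omega)
  · intro e he h
    rw [hR.wave_of_le he, hR.wave_of_le (by omega), add_right_comm]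
    exact mul_lt_mul_of_pos_left (migration_succ_lt hR.m_pos hR.m_lt_one hR.antitone_wave h)
      hR.r_pos

theorem migration_wave_lt (hR : IsDispersionRoot r m p q η) (hp : 0 < p) (hpq : p < q) :
    migration m q (wave r m p q η) (q + p) < migration m q (wave r m p q η) (q + p - 1) := by
  have h := migration_succ_lt (k := q) (x := q + p - 1) hR.m_pos hR.m_lt_one hR.antitone_wave
    (Or.inr (by rw [sub_add_cancel]; exact hR.wave_lt_wave hp hpq))
  rwa [sub_add_cancel] at h

end IsDispersionRoot

theorem exists_isDispersionRoot {r m : ℝ} {p q : ℕ} (hr : 1 < r) (hp : 0 < p) (hm0 : 0 < m)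
    (hm1 : m < 1) (hm : m < ((2 * r) ^ q)⁻¹) : ∃ η, IsDispersionRoot r m p q η := by
  set f : ℝ → ℝ := fun x => r * (m / 2 * x ^ q + (1 - m) + m / 2 * (x ^ q)⁻¹) - x ^ p
  have hcont : ContinuousOn f (Set.Icc 1 (2 * r)) := by
    have hX : ∀ x ∈ Set.Icc 1 (2 * r), x ^ q ≠ 0 :=
      fun x hx => pow_ne_zero _ (by linarith [hx.1])
    exact (continuousOn_const.mul (((continuousOn_const.mul (continuousOn_pow q)).add
      continuousOn_const).add (continuousOn_const.mul ((continuousOn_pow q).inv₀ hX)))).sub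
      (continuousOn_pow p)
  have hf₁ : 0 < f 1 := by simp only [f]; norm_num; linarith
  have hf₂ : f (2 * r) < 0 := by
    have hX : 1 ≤ (2 * r) ^ q := one_le_pow₀ (by linarith)
    have hmX : m * (2 * r) ^ q < 1 := by
      have := mul_lt_mul_of_pos_right hm (by positivity : (0 : ℝ) < (2 * r) ^ q)
      rwa [inv_mul_cancel₀ (by positivity)] at this
    have hmX' : m * ((2 * r) ^ q)⁻¹ ≤ m :=
      mul_le_of_le_one_right hm0.le (inv_le_one_of_one_le₀ hX)
    have hxp : 2 * r ≤ (2 * r) ^ p := le_self_pow₀ (by linarith) hp.ne'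
    simp only [f]
    nlinarith
  obtain ⟨η, ⟨hη, -⟩, hfη⟩ :=
    intermediate_value_Ioo' (by linarith) hcont ⟨hf₂, hf₁⟩
  exact ⟨η, by linarith, hm0, hm1, hη, sub_eq_zero.1 hfη⟩

end TravelingFront

open TravelingFront in
theorem stmt_8_general (r : ℝ) (hr : 1 < r) (p q : ℕ) (hp : 0 < p) (hpq : p < q) :
    ∃ mstar : ℝ, 0 < mstar ∧
      ∀ m : ℝ, 0 < m → m < min 1 mstar →
        ∃ cmin cmax : ℝ, 0 < cmin ∧ cmin < cmax ∧
          ∀ c : ℝ, cmin < c → c < cmax →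
            ∃ φ : ℤ → ℝ,
              (∀ i : ℤ, i ≤ 0 → φ i = 1) ∧
              (∀ i : ℤ, 0 < φ i) ∧
              Tendsto φ atTop (nhds 0) ∧
              ∀ i : ℤ, (G r c m)^[q] φ i = φ (i - p) := by
  refine ⟨((2 * r) ^ q)⁻¹, by positivity, fun m hm0 hm => ?_⟩
  obtain ⟨hm1, hmstar⟩ := lt_min_iff.1 hm
  obtain ⟨η, hR⟩ := exists_isDispersionRoot hr hp hm0 hm1 hmstar
  refine ⟨_, _, migration_pos hm0.le hm1 hR.wave_pos (q + p), hR.migration_wave_lt hp hpq,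
    fun c hc₁ hc₂ => ?_⟩
  have hprofile := g_migration_eq_of_isFixedPt hR.isFixedPt_wave hR.antitone_wave hm0.le hm1.le
    hc₁ hc₂.le
  refine ⟨fun i => wave r m p q η (q * i), fun i hi => hR.wave_of_lt (by nlinarith),
    fun i => hR.wave_pos _, hR.tendsto_wave.comp (tendsto_id.const_mul_atTop' (by omega)),
    fun i => ?_⟩
  simp only [iterate_G_of_profile hprofile, mul_sub]

theorem stmt_8 (r : ℝ) (hr : 1 < r) (p q : ℕ) (hp : 0 < p) (hpq : p < q)
    (hcop : Nat.Coprime p q) :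
    ∃ mstar : ℝ, 0 < mstar ∧
      ∀ m : ℝ, 0 < m → m < min 1 mstar →
        ∃ cmin cmax : ℝ, 0 < cmin ∧ cmin < cmax ∧
          ∀ c : ℝ, cmin < c → c < cmax →
            ∃ φ : ℤ → ℝ,
              (∀ i : ℤ, i ≤ 0 → φ i = 1) ∧
              (∀ i : ℤ, 0 < φ i) ∧
              Tendsto φ atTop (nhds 0) ∧
              ∀ i : ℤ, (G r c m)^[q] φ i = φ (i - p) :=
  stmt_8_general r hr p q hp hpq
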